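/- Let X_1, X_2, ... be i.i.d. ±1-valued with P[X_i = 1] = p, and S_n = X_1 + ... + X_n. For any reals p̲ < p̄, the limit lim_{n→∞} -(1/n) log P[2p̲ - 1 ≤ S_n/n ≤ 2p̄ - 1] equals D_KL(p̲ || p) if p < p̲, equals 0 if p̲ ≤ p ≤ p̄, and equals D_KL(p̄ || p) if p̄ < p, assuming 0 ≤ p̲ < p̄ ≤ 1. -/

import Mathlib

/-!
Let `N_n` be the number of indices `i < n` with `X_i = 1`. Then `S_n = 2 N_n - n`, so the event
is `n p̲ ≤ N_n ≤ n p̄`, and `N_n` is binomial. Tilting each binomial weight to the empirical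
frequency `x = j / n` gives
`C(n,j) p^j (1-p)^(n-j) = C(n,j) x^j (1-x)^(n-j) · exp (-n D(x ‖ p))`,
and the first factor is the largest weight of `Bin(n, x)`, hence lies in `[1/(n+1), 1]`.
So the probability lies between `exp (-n D(j_n/n ‖ p)) / (n+1)` for any admissible `j_n` and
`(n+1) · exp (-n min_{[p̲, p̄]} D(· ‖ p))`. Choosing `j_n / n` tending to the minimiser and using
the continuity of `D(· ‖ p)` gives the rate. As `D(· ‖ p)` decreases on `[0, p]` and increases on
`[p, 1]`, the minimiser is `p̲`, `p` or `p̄`.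
-/

open MeasureTheory ProbabilityTheory Filter

/-- Bernoulli Kullback-Leibler divergence `D_KL(x || p)`. -/
noncomputable def klBer (x p : ℝ) : ℝ :=
  x * Real.log (x / p) + (1 - x) * Real.log ((1 - x) / (1 - p))

open Finset Topology InformationTheory

noncomputable def binomProb (n j : ℕ) (x : ℝ) : ℝ :=
  n.choose j * x ^ j * (1 - x) ^ (n - j)

section binomProb

variable {n j k : ℕ} {x : ℝ}

lemma binomProb_nonneg (hx0 : 0 ≤ x) (hx1 : x ≤ 1) : 0 ≤ binomProb n j x := by
  unfold binomProb
  have : 0 ≤ 1 - x := by linarith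
  positivity

lemma binomProb_eq_zero_of_lt (h : n < j) : binomProb n j x = 0 := by
  simp [binomProb, Nat.choose_eq_zero_of_lt h]

lemma sum_binomProb (n : ℕ) (x : ℝ) : ∑ j ∈ range (n + 1), binomProb n j x = 1 := by
  have h := (add_pow x (1 - x) n).symm
  rw [add_sub_cancel, one_pow] at h
  rw [← h]
  exact sum_congr rfl fun j _ => by simp only [binomProb]; ring

lemma binomProb_succ_zero (n : ℕ) (x : ℝ) :
    binomProb (n + 1) 0 x = binomProb n 0 x * (1 - x) := by
  simp [binomProb, pow_succ]

lemma binomProb_succ_succ (n k : ℕ) (x : ℝ) :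
    binomProb (n + 1) (k + 1) x = binomProb n (k + 1) x * (1 - x) + binomProb n k x * x := by
  rcases lt_or_ge k n with hk | hk
  · obtain ⟨m, rfl⟩ := Nat.exists_eq_add_of_lt hk
    rw [binomProb, binomProb, binomProb, Nat.choose_succ_succ,
      show k + m + 1 + 1 - (k + 1) = m + 1 by omega, show k + m + 1 - (k + 1) = m by omega,
      show k + m + 1 - k = m + 1 by omega]
    push_cast
    ring
  · rw [binomProb_eq_zero_of_lt (by omega : n < k + 1)]
    simp only [binomProb, Nat.choose_succ_succ, Nat.choose_eq_zero_of_lt (by omega : n < k + 1),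
      Nat.sub_eq_zero_of_le hk, Nat.sub_eq_zero_of_le (by omega : n + 1 ≤ k + 1), add_zero]
    ring

lemma binomProb_succ_mul (hk : k < n) (x : ℝ) :
    (k + 1) * (1 - x) * binomProb n (k + 1) x = (n - k) * x * binomProb n k x := by
  have hchoose : (n.choose (k + 1) : ℝ) * (k + 1) = n.choose k * (n - k) := by
    have h := congrArg (Nat.cast (R := ℝ)) (Nat.choose_succ_right_eq n k)
    push_cast [Nat.cast_sub hk.le] at h
    exact h
  obtain ⟨m, rfl⟩ := Nat.exists_eq_add_of_lt hk
  simp only [binomProb, show k + m + 1 - (k + 1) = m by omega,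
    show k + m + 1 - k = m + 1 by omega] at hchoose ⊢
  linear_combination x ^ k * x * (1 - x) * (1 - x) ^ m * hchoose

lemma binomProb_le_succ (hx1 : x ≤ 1) (h : (k + 1 : ℝ) ≤ n * x) :
    binomProb n k x ≤ binomProb n (k + 1) x := by
  have hkn : k < n := by
    have : (k + 1 : ℝ) ≤ n := h.trans (mul_le_of_le_one_right n.cast_nonneg hx1)
    exact_mod_cast this
  have hpos : 0 < (n - k : ℝ) * x := by
    have : (k : ℝ) < n := by exact_mod_cast hkn
    nlinarith
  refine le_of_mul_le_mul_left ?_ hpos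
  rw [← binomProb_succ_mul hkn]
  exact mul_le_mul_of_nonneg_right (by nlinarith) (binomProb_nonneg (by nlinarith) hx1)

lemma binomProb_succ_le (hx0 : 0 ≤ x) (hx1 : x ≤ 1) (h : n * x ≤ k) :
    binomProb n (k + 1) x ≤ binomProb n k x := by
  rcases le_or_gt n k with hkn | hkn
  · rw [binomProb_eq_zero_of_lt (Nat.lt_succ_of_le hkn)]
    exact binomProb_nonneg hx0 hx1
  have hx : x < 1 := by
    by_contra! hx
    have : (k : ℝ) < n := by exact_mod_cast hkn
    nlinarith
  have hpos : 0 < (k + 1 : ℝ) * (1 - x) := by nlinarith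
  refine le_of_mul_le_mul_left ?_ hpos
  rw [binomProb_succ_mul hkn]
  exact mul_le_mul_of_nonneg_right (by nlinarith) (binomProb_nonneg hx0 hx1)

lemma binomProb_le_of_mul_eq (hx0 : 0 ≤ x) (hx1 : x ≤ 1) (hj : n * x = j) (k : ℕ) :
    binomProb n k x ≤ binomProb n j x := by
  rcases le_total k j with hkj | hjk
  · refine monotoneOn_of_le_succ (f := fun k => binomProb n k x) (Set.ordConnected_Iic (a := j))
      (fun a _ _ ha => ?_) hkj (le_refl j) hkj
    rw [Set.mem_Iic, Order.succ_eq_add_one] at ha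
    rw [Order.succ_eq_add_one]
    exact binomProb_le_succ hx1 (by rw [hj]; exact_mod_cast ha)
  · exact antitoneOn_nat_Ici_of_succ_le (f := fun k => binomProb n k x)
      (fun m hm => binomProb_succ_le hx0 hx1 (by rw [hj]; exact_mod_cast hm)) (le_refl j) hjk hjk

lemma binomProb_le_one (hx0 : 0 ≤ x) (hx1 : x ≤ 1) : binomProb n j x ≤ 1 := by
  rcases le_or_gt j n with hj | hj
  · rw [← sum_binomProb n x]
    exact single_le_sum (f := fun k => binomProb n k x) (fun k _ => binomProb_nonneg hx0 hx1)
      (mem_range_succ_iff.2 hj)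
  · rw [binomProb_eq_zero_of_lt hj]
    exact zero_le_one

lemma inv_succ_le_binomProb (hx0 : 0 ≤ x) (hx1 : x ≤ 1) (hj : n * x = j) :
    ((n : ℝ) + 1)⁻¹ ≤ binomProb n j x := by
  rw [inv_le_iff_one_le_mul₀' (by positivity)]
  calc (1 : ℝ) = ∑ k ∈ range (n + 1), binomProb n k x := (sum_binomProb n x).symm
    _ ≤ ∑ _k ∈ range (n + 1), binomProb n j x :=
      sum_le_sum fun k _ => binomProb_le_of_mul_eq hx0 hx1 hj k
    _ = ((n : ℝ) + 1) * binomProb n j x := by simp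

end binomProb

lemma pow_mul_exp_neg_mul_log_div {y p : ℝ} (hp : 0 < p) (m : ℕ) (hy : 0 < y ∨ m = 0) :
    y ^ m * Real.exp (-(m * Real.log (y / p))) = p ^ m := by
  rcases hy with hy | rfl
  · rw [show -(m * Real.log (y / p)) = Real.log ((p / y) ^ m) by
        rw [Real.log_pow, ← inv_div, Real.log_inv]; ring,
      Real.exp_log (by positivity), ← mul_pow, mul_div_cancel₀ _ hy.ne']
  · simp

lemma binomProb_eq_mul_exp_klBer {p : ℝ} (hp0 : 0 < p) (hp1 : p < 1) {n j : ℕ} (hn : 0 < n)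
    (hj : j ≤ n) :
    binomProb n j p = binomProb n j (j / n) * Real.exp (-(n * klBer (j / n) p)) := by
  set x : ℝ := j / n with hx
  have hnx : n * x = j := by rw [hx]; field_simp
  have hexp : n * klBer x p = j * Real.log (x / p) + ((n - j : ℕ) : ℝ) *
      Real.log ((1 - x) / (1 - p)) := by
    rw [klBer, Nat.cast_sub hj, ← hnx]; ring
  have hx0 : 0 < x ∨ j = 0 := by
    rcases Nat.eq_zero_or_pos j with h | h
    · exact Or.inr h
    · exact Or.inl (by rw [hx]; positivity)
  have hx1 : 0 < 1 - x ∨ n - j = 0 := by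
    rcases hj.lt_or_eq with h | h
    · refine Or.inl (sub_pos.2 ?_)
      rw [hx, div_lt_one (by positivity)]
      exact_mod_cast h
    · exact Or.inr (by omega)
  rw [hexp, neg_add, Real.exp_add, binomProb, binomProb,
    ← pow_mul_exp_neg_mul_log_div hp0 j hx0, ← pow_mul_exp_neg_mul_log_div (sub_pos.2 hp1) _ hx1]
  ring

section klBer

variable {p : ℝ}

lemma klBer_eq_klFun (hp0 : p ≠ 0) (hp1 : p ≠ 1) (x : ℝ) :
    klBer x p = p * klFun (x / p) + (1 - p) * klFun ((1 - x) / (1 - p)) := by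
  have : 1 - p ≠ 0 := sub_ne_zero.2 hp1.symm
  simp only [klBer, klFun]
  field_simp
  ring

lemma klBer_self (p : ℝ) : klBer p p = 0 := by
  simp [klBer]

lemma continuous_klBer (hp0 : p ≠ 0) (hp1 : p ≠ 1) : Continuous (klBer · p) := by
  simp only [klBer_eq_klFun hp0 hp1]
  fun_prop

lemma klBer_nonneg (hp0 : 0 < p) (hp1 : p < 1) {x : ℝ} (hx0 : 0 ≤ x) (hx1 : x ≤ 1) :
    0 ≤ klBer x p := by
  rw [klBer_eq_klFun hp0.ne' hp1.ne]
  have h1 := klFun_nonneg (div_nonneg hx0 hp0.le)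
  have h2 := klFun_nonneg (div_nonneg (sub_nonneg.2 hx1) (sub_pos.2 hp1).le)
  nlinarith

lemma hasDerivAt_klBer (hp0 : p ≠ 0) (hp1 : p ≠ 1) {x : ℝ} (hx0 : x ≠ 0) (hx1 : x ≠ 1) :
    HasDerivAt (klBer · p) (Real.log (x / p) - Real.log ((1 - x) / (1 - p))) x := by
  have hq : 1 - p ≠ 0 := sub_ne_zero.2 hp1.symm
  simp only [klBer_eq_klFun hp0 hp1]
  have h1 := ((hasDerivAt_klFun (div_ne_zero hx0 hp0)).comp x
    ((hasDerivAt_id x).div_const p)).const_mul p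
  have h2 := ((hasDerivAt_klFun (div_ne_zero (sub_ne_zero.2 hx1.symm) hq)).comp x
    (((hasDerivAt_id x).const_sub 1).div_const (1 - p))).const_mul (1 - p)
  refine (h1.add h2).congr_deriv ?_
  field_simp
  ring

lemma monotoneOn_klBer (hp0 : 0 < p) (hp1 : p < 1) : MonotoneOn (klBer · p) (Set.Icc p 1) := by
  refine monotoneOn_of_hasDerivWithinAt_nonneg (convex_Icc p 1)
    (continuous_klBer hp0.ne' hp1.ne).continuousOn
    (fun x hx => (hasDerivAt_klBer hp0.ne' hp1.ne ?_ ?_).hasDerivWithinAt) (fun x hx => ?_)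
  all_goals rw [interior_Icc] at hx
  · exact (hp0.trans hx.1).ne'
  · exact hx.2.ne
  · have h1 : 0 ≤ Real.log (x / p) := Real.log_nonneg ((one_le_div hp0).2 hx.1.le)
    have h2 : Real.log ((1 - x) / (1 - p)) ≤ 0 :=
      Real.log_nonpos (div_nonneg (by linarith [hx.2]) (by linarith))
        ((div_le_one (by linarith)).2 (by linarith [hx.1]))
    linarith

lemma antitoneOn_klBer (hp0 : 0 < p) (hp1 : p < 1) : AntitoneOn (klBer · p) (Set.Icc 0 p) := by
  refine antitoneOn_of_hasDerivWithinAt_nonpos (convex_Icc 0 p)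
    (continuous_klBer hp0.ne' hp1.ne).continuousOn
    (fun x hx => (hasDerivAt_klBer hp0.ne' hp1.ne ?_ ?_).hasDerivWithinAt) (fun x hx => ?_)
  all_goals rw [interior_Icc] at hx
  · exact hx.1.ne'
  · exact (hx.2.trans hp1).ne
  · have h1 : Real.log (x / p) ≤ 0 :=
      Real.log_nonpos (div_nonneg hx.1.le hp0.le) ((div_le_one hp0).2 hx.2.le)
    have h2 : 0 ≤ Real.log ((1 - x) / (1 - p)) :=
      Real.log_nonneg ((one_le_div (by linarith)).2 (by linarith [hx.2]))
    linarith

lemma isMinOn_klBer_left (hp0 : 0 < p) (hp1 : p < 1) {pl pu : ℝ} (hpl : p ≤ pl) (hpu : pu ≤ 1) :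
    IsMinOn (klBer · p) (Set.Icc pl pu) pl :=
  isMinOn_iff.2 fun _ hy => monotoneOn_klBer hp0 hp1 ⟨hpl, hy.1.trans (hy.2.trans hpu)⟩
    ⟨hpl.trans hy.1, hy.2.trans hpu⟩ hy.1

lemma isMinOn_klBer_right (hp0 : 0 < p) (hp1 : p < 1) {pl pu : ℝ} (hpl : 0 ≤ pl) (hpu : pu ≤ p) :
    IsMinOn (klBer · p) (Set.Icc pl pu) pu :=
  isMinOn_iff.2 fun _ hy => antitoneOn_klBer hp0 hp1 ⟨hpl.trans hy.1, hy.2.trans hpu⟩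
    ⟨(hpl.trans hy.1).trans hy.2, hpu⟩ hy.2

lemma isMinOn_klBer_self (hp0 : 0 < p) (hp1 : p < 1) {pl pu : ℝ} (hpl : 0 ≤ pl) (hpu : pu ≤ 1) :
    IsMinOn (klBer · p) (Set.Icc pl pu) p :=
  isMinOn_iff.2 fun _ hy => by
    simpa only [klBer_self] using klBer_nonneg hp0 hp1 (hpl.trans hy.1) (hy.2.trans hpu)

end klBer

section BinomialLaw

variable {Ω : Type*} [MeasurableSpace Ω] {μ : Measure Ω} [IsProbabilityMeasure μ]
  {Z : ℕ → Ω → ℕ} {q : ℝ}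

lemma measureReal_sum_eq_binomProb (hmeas : ∀ i, Measurable (Z i)) (hindep : iIndepFun Z μ)
    (hval : ∀ i ω, Z i ω = 0 ∨ Z i ω = 1) (hq : ∀ i, μ.real {ω | Z i ω = 1} = q) (n j : ℕ) :
    μ.real {ω | ∑ i ∈ range n, Z i ω = j} = binomProb n j q := by
  induction n generalizing j with
  | zero => cases j <;> simp [binomProb]
  | succ n ih =>
    have hT : Measurable fun ω => ∑ i ∈ range n, Z i ω :=
      Finset.measurable_sum _ fun i _ => hmeas i
    have hZ0 : μ.real {ω | Z n ω = 0} = 1 - q := by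
      have : {ω | Z n ω = 0} = {ω | Z n ω = 1}ᶜ := by
        ext ω; rcases hval n ω with h | h <;> simp [h]
      rw [this, measureReal_compl (s := {ω | Z n ω = 1}) (hmeas n (measurableSet_singleton 1)),
        probReal_univ, hq]
    have hprod : ∀ a b, μ.real {ω | ∑ i ∈ range n, Z i ω = a ∧ Z n ω = b} =
        μ.real {ω | ∑ i ∈ range n, Z i ω = a} * μ.real {ω | Z n ω = b} := by
      intro a b
      have hindep_n := hindep.indepFun_sum_range_succ hmeas n
      rw [Finset.sum_fn] at hindep_n
      rw [measureReal_def, measureReal_def, measureReal_def, ← ENNReal.toReal_mul]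
      exact congrArg ENNReal.toReal (hindep_n.measure_inter_preimage_eq_mul _ _
        (measurableSet_singleton a) (measurableSet_singleton b))
    rcases j with _ | k
    · have hset : {ω | ∑ i ∈ range (n + 1), Z i ω = (0 : ℕ)} =
          {ω | ∑ i ∈ range n, Z i ω = 0 ∧ Z n ω = 0} := by
        ext ω; simp [sum_range_succ]
      rw [hset, hprod, ih, hZ0, binomProb_succ_zero]
    · have hset : {ω | ∑ i ∈ range (n + 1), Z i ω = k + 1} =
          {ω | ∑ i ∈ range n, Z i ω = k + 1 ∧ Z n ω = 0} ∪
            {ω | ∑ i ∈ range n, Z i ω = k ∧ Z n ω = 1} := by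
        ext ω; rcases hval n ω with h | h <;> simp [sum_range_succ, h]
      have hdisj : Disjoint {ω | ∑ i ∈ range n, Z i ω = k + 1 ∧ Z n ω = 0}
          {ω | ∑ i ∈ range n, Z i ω = k ∧ Z n ω = 1} :=
        Set.disjoint_left.2 fun ω h h' => by simp_all
      have hmeas' : MeasurableSet {ω | ∑ i ∈ range n, Z i ω = k ∧ Z n ω = 1} :=
        (hT (measurableSet_singleton k)).inter (hmeas n (measurableSet_singleton 1))
      rw [hset, measureReal_union hdisj hmeas', hprod, hprod, ih, ih, hZ0, hq,
        binomProb_succ_succ]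

lemma measureReal_sum_mem_eq_sum_binomProb (hmeas : ∀ i, Measurable (Z i))
    (hindep : iIndepFun Z μ) (hval : ∀ i ω, Z i ω = 0 ∨ Z i ω = 1)
    (hq : ∀ i, μ.real {ω | Z i ω = 1} = q) (n : ℕ) (s : Finset ℕ) :
    μ.real {ω | ∑ i ∈ range n, Z i ω ∈ s} = ∑ j ∈ s, binomProb n j q := by
  have hT : Measurable fun ω => ∑ i ∈ range n, Z i ω := Finset.measurable_sum _ fun i _ => hmeas i
  refine (sum_measureReal_preimage_singleton s fun j _ => hT (measurableSet_singleton j)).symm.trans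
    (sum_congr rfl fun j _ => measureReal_sum_eq_binomProb hmeas hindep hval hq n j)

end BinomialLaw

noncomputable def admissibleCounts (pl pu : ℝ) (n : ℕ) : Finset ℕ :=
  (range (n + 1)).filter fun j => pl * n ≤ j ∧ j ≤ pu * n

section Asymptotics

variable {p pl pu : ℝ}

lemma mem_admissibleCounts {n j : ℕ} :
    j ∈ admissibleCounts pl pu n ↔ j ≤ n ∧ pl * n ≤ j ∧ j ≤ pu * n := by
  simp [admissibleCounts]

lemma div_mem_Icc_of_mem_admissibleCounts {n j : ℕ} (hn : 0 < n)
    (hj : j ∈ admissibleCounts pl pu n) : (j / n : ℝ) ∈ Set.Icc pl pu := by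
  obtain ⟨-, hl, hu⟩ := mem_admissibleCounts.1 hj
  have hn' : (0 : ℝ) < n := by exact_mod_cast hn
  exact ⟨(le_div_iff₀ hn').2 hl, (div_le_iff₀ hn').2 hu⟩

lemma exists_mem_admissibleCounts_tendsto (hpl : 0 ≤ pl) (hlu : pl < pu) (hpu : pu ≤ 1)
    {x : ℝ} (hx : x ∈ Set.Icc pl pu) :
    ∃ j : ℕ → ℕ, (∀ᶠ n in atTop, j n ∈ admissibleCounts pl pu n) ∧
      Tendsto (fun n => (j n : ℝ) / n) atTop (𝓝 x) := by
  have hx0 : 0 ≤ x := hpl.trans hx.1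
  have hlarge {c : ℝ} (hc : 0 < c) : ∀ᶠ n : ℕ in atTop, 1 ≤ c * n :=
    (tendsto_natCast_atTop_atTop.const_mul_atTop hc).eventually_ge_atTop 1
  have hmem {j : ℕ → ℕ} (h : ∀ᶠ n : ℕ in atTop, pl * n ≤ j n ∧ (j n : ℝ) ≤ pu * n) :
      ∀ᶠ n in atTop, j n ∈ admissibleCounts pl pu n := by
    filter_upwards [h] with n ⟨hl, hu⟩
    refine mem_admissibleCounts.2 ⟨?_, hl, hu⟩
    exact_mod_cast hu.trans (mul_le_of_le_one_left n.cast_nonneg hpu)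
  rcases hx.2.lt_or_eq with hxu | rfl
  · refine ⟨fun n => ⌈x * n⌉₊, hmem ?_,
      (tendsto_nat_ceil_mul_div_atTop hx0).comp tendsto_natCast_atTop_atTop⟩
    filter_upwards [hlarge (sub_pos.2 hxu)] with n hn
    have := Nat.ceil_lt_add_one (mul_nonneg hx0 n.cast_nonneg)
    exact ⟨(mul_le_mul_of_nonneg_right hx.1 n.cast_nonneg).trans (Nat.le_ceil _), by nlinarith⟩
  · refine ⟨fun n => ⌊x * n⌋₊, hmem ?_,
      (tendsto_nat_floor_mul_div_atTop hx0).comp tendsto_natCast_atTop_atTop⟩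
    filter_upwards [hlarge (sub_pos.2 hlu)] with n hn
    have := Nat.lt_floor_add_one (x * n)
    exact ⟨by nlinarith, Nat.floor_le (mul_nonneg hx0 n.cast_nonneg)⟩

lemma tendsto_log_succ_div_atTop :
    Tendsto (fun n : ℕ => Real.log (n + 1) / n) atTop (𝓝 0) := by
  have h := (Real.tendsto_pow_log_div_mul_add_atTop 1 (-1) 1 one_ne_zero).comp
    (tendsto_atTop_add_const_right _ 1 (tendsto_natCast_atTop_atTop (R := ℝ)))
  refine h.congr fun n => ?_
  simp

lemma inv_mul_exp_le_sum_binomProb (hp0 : 0 < p) (hp1 : p < 1) {n j : ℕ} (hn : 0 < n)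
    (hj : j ∈ admissibleCounts pl pu n) :
    ((n : ℝ) + 1)⁻¹ * Real.exp (-(n * klBer (j / n) p)) ≤
      ∑ k ∈ admissibleCounts pl pu n, binomProb n k p := by
  have hjn := (mem_admissibleCounts.1 hj).1
  have hn' : (0 : ℝ) < n := by exact_mod_cast hn
  have hx1 : (j / n : ℝ) ≤ 1 := (div_le_one hn').2 (by exact_mod_cast hjn)
  calc ((n : ℝ) + 1)⁻¹ * Real.exp (-(n * klBer (j / n) p))
      ≤ binomProb n j (j / n) * Real.exp (-(n * klBer (j / n) p)) := by
        gcongr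
        exact inv_succ_le_binomProb (by positivity) hx1 (by field_simp)
    _ = binomProb n j p := (binomProb_eq_mul_exp_klBer hp0 hp1 hn hjn).symm
    _ ≤ ∑ k ∈ admissibleCounts pl pu n, binomProb n k p :=
        single_le_sum (f := fun k => binomProb n k p)
          (fun k _ => binomProb_nonneg hp0.le hp1.le) hj

lemma sum_binomProb_le_mul_exp (hp0 : 0 < p) (hp1 : p < 1) {n : ℕ} (hn : 0 < n) {x : ℝ}
    (hmin : IsMinOn (klBer · p) (Set.Icc pl pu) x) :
    ∑ k ∈ admissibleCounts pl pu n, binomProb n k p ≤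
      ((n : ℝ) + 1) * Real.exp (-(n * klBer x p)) := by
  have hn' : (0 : ℝ) < n := by exact_mod_cast hn
  have hterm : ∀ k ∈ admissibleCounts pl pu n, binomProb n k p ≤ Real.exp (-(n * klBer x p)) := by
    intro k hk
    have hkn := (mem_admissibleCounts.1 hk).1
    have hx1 : (k / n : ℝ) ≤ 1 := (div_le_one hn').2 (by exact_mod_cast hkn)
    rw [binomProb_eq_mul_exp_klBer hp0 hp1 hn hkn]
    refine (mul_le_of_le_one_left (Real.exp_pos _).le
      (binomProb_le_one (by positivity) hx1)).trans ?_
    gcongr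
    exact isMinOn_iff.1 hmin _ (div_mem_Icc_of_mem_admissibleCounts hn hk)
  calc ∑ k ∈ admissibleCounts pl pu n, binomProb n k p
      ≤ (admissibleCounts pl pu n).card • Real.exp (-(n * klBer x p)) := sum_le_card_nsmul _ _ _ hterm
    _ ≤ ((n : ℝ) + 1) * Real.exp (-(n * klBer x p)) := by
        rw [nsmul_eq_mul]
        gcongr
        exact_mod_cast (card_filter_le _ _).trans (card_range _).le

lemma le_neg_inv_mul_log_le {n : ℕ} (hn : 0 < n) {A a b : ℝ}
    (hlo : ((n : ℝ) + 1)⁻¹ * Real.exp (-(n * a)) ≤ A)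
    (hhi : A ≤ ((n : ℝ) + 1) * Real.exp (-(n * b))) :
    b - Real.log (n + 1) / n ≤ -(1 / n) * Real.log A ∧
      -(1 / n) * Real.log A ≤ a + Real.log (n + 1) / n := by
  have hn' : (0 : ℝ) < n := by exact_mod_cast hn
  have hA : 0 < A := lt_of_lt_of_le (by positivity) hlo
  have hup := Real.log_le_log hA hhi
  have hdown := Real.log_le_log (by positivity) hlo
  rw [Real.log_mul (by positivity) (Real.exp_pos _).ne', Real.log_exp] at hup
  rw [Real.log_mul (by positivity) (Real.exp_pos _).ne', Real.log_exp, Real.log_inv] at hdown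
  constructor
  · rw [show -(1 / n) * Real.log A = b - Real.log (n + 1) / n +
        (Real.log (n + 1) + -(n * b) - Real.log A) / n by field_simp; ring]
    linarith [div_nonneg (sub_nonneg.2 hup) hn'.le]
  · rw [show -(1 / n) * Real.log A = a + Real.log (n + 1) / n -
        (Real.log A - (-Real.log (n + 1) + -(n * a))) / n by field_simp; ring]
    linarith [div_nonneg (sub_nonneg.2 hdown) hn'.le]

theorem tendsto_neg_log_sum_binomProb (hp0 : 0 < p) (hp1 : p < 1) (hpl : 0 ≤ pl)
    (hlu : pl < pu) (hpu : pu ≤ 1) {x : ℝ} (hx : x ∈ Set.Icc pl pu)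
    (hmin : IsMinOn (klBer · p) (Set.Icc pl pu) x) :
    Tendsto (fun n : ℕ => -(1 / (n : ℝ)) *
      Real.log (∑ k ∈ admissibleCounts pl pu n, binomProb n k p)) atTop (𝓝 (klBer x p)) := by
  obtain ⟨j, hj, hjx⟩ := exists_mem_admissibleCounts_tendsto hpl hlu hpu hx
  have hkl := ((continuous_klBer hp0.ne' hp1.ne).tendsto x).comp hjx
  have hlog := tendsto_log_succ_div_atTop
  have hbounds : ∀ᶠ n : ℕ in atTop,
      klBer x p - Real.log (n + 1) / n ≤
        -(1 / (n : ℝ)) * Real.log (∑ k ∈ admissibleCounts pl pu n, binomProb n k p) ∧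
      -(1 / (n : ℝ)) * Real.log (∑ k ∈ admissibleCounts pl pu n, binomProb n k p) ≤
        klBer (j n / n) p + Real.log (n + 1) / n := by
    filter_upwards [hj, eventually_gt_atTop 0] with n hjn hn
    exact le_neg_inv_mul_log_le hn (inv_mul_exp_le_sum_binomProb hp0 hp1 hn hjn)
      (sum_binomProb_le_mul_exp hp0 hp1 hn hmin)
  refine tendsto_of_tendsto_of_tendsto_of_le_of_le' ?_ ?_ (hbounds.mono fun _ h => h.1)
    (hbounds.mono fun _ h => h.2)
  · simpa using tendsto_const_nhds.sub hlog
  · simpa using hkl.add hlog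

end Asymptotics

lemma measureReal_mean_mem_eq_sum_binomProb {Ω : Type*} [MeasurableSpace Ω] {μ : Measure Ω}
    [IsProbabilityMeasure μ] {p : ℝ} {X : ℕ → Ω → ℤ} (hmeas : ∀ i, Measurable (X i))
    (hindep : iIndepFun X μ) (hval : ∀ i ω, X i ω = 1 ∨ X i ω = -1)
    (hdist : ∀ i, μ.real {ω | X i ω = 1} = p) (pl pu : ℝ) {n : ℕ} (hn : 0 < n) :
    μ.real {ω | 2 * pl - 1 ≤ ((∑ k ∈ range n, X k ω : ℤ) : ℝ) / n ∧
        ((∑ k ∈ range n, X k ω : ℤ) : ℝ) / n ≤ 2 * pu - 1} =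
      ∑ j ∈ admissibleCounts pl pu n, binomProb n j p := by
  obtain ⟨Z, hZ⟩ : ∃ Z : ℕ → Ω → ℕ, Z = fun i => (fun z : ℤ => if z = 1 then 1 else 0) ∘ X i :=
    ⟨_, rfl⟩
  have hZmeas : ∀ i, Measurable (Z i) := fun i => hZ ▸ Measurable.of_discrete.comp (hmeas i)
  have hZindep : iIndepFun Z μ := hZ ▸ hindep.comp _ fun _ => Measurable.of_discrete
  have hZval : ∀ i ω, Z i ω = 0 ∨ Z i ω = 1 := fun i ω => by
    rcases hval i ω with h | h <;> simp [hZ, h]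
  have hXZ : ∀ i ω, (X i ω : ℝ) = 2 * Z i ω - 1 := fun i ω => by
    rcases hval i ω with h | h <;> norm_num [hZ, h]
  have hZdist : ∀ i, μ.real {ω | Z i ω = 1} = p := fun i => by
    rw [← hdist i]
    congr 1
    ext ω
    rcases hval i ω with h | h <;> simp [hZ, h]
  rw [← measureReal_sum_mem_eq_sum_binomProb hZmeas hZindep hZval hZdist]
  have hZle : ∀ ω, ∑ k ∈ range n, Z k ω ≤ n := fun ω => by
    calc ∑ k ∈ range n, Z k ω ≤ ∑ _k ∈ range n, 1 :=
          sum_le_sum fun k _ => by rcases hZval k ω with h | h <;> simp [h]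
      _ = n := by simp
  have hn' : (0 : ℝ) < n := by exact_mod_cast hn
  congr 1
  ext ω
  have hcount : ((∑ k ∈ range n, X k ω : ℤ) : ℝ) = 2 * (∑ k ∈ range n, Z k ω : ℕ) - n := by
    push_cast [hXZ, sum_sub_distrib, ← mul_sum]
    simp
  simp only [Set.mem_ofPred_eq, mem_admissibleCounts, hcount, le_div_iff₀ hn', div_le_iff₀ hn',
    hZle ω, true_and]
  constructor <;> rintro ⟨h1, h2⟩ <;> constructor <;> linarith

theorem tendsto_neg_log_measureReal_mean_mem {Ω : Type*} [MeasurableSpace Ω] {μ : Measure Ω}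
    [IsProbabilityMeasure μ] {p : ℝ} (hp0 : 0 < p) (hp1 : p < 1) {X : ℕ → Ω → ℤ}
    (hmeas : ∀ i, Measurable (X i)) (hindep : iIndepFun X μ)
    (hval : ∀ i ω, X i ω = 1 ∨ X i ω = -1) (hdist : ∀ i, μ.real {ω | X i ω = 1} = p)
    {pl pu : ℝ} (hpl : 0 ≤ pl) (hlu : pl < pu) (hpu : pu ≤ 1) {x : ℝ} (hx : x ∈ Set.Icc pl pu)
    (hmin : IsMinOn (klBer · p) (Set.Icc pl pu) x) :
    Tendsto (fun n : ℕ => -(1 / (n : ℝ)) * Real.log (μ.real {ω |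
        2 * pl - 1 ≤ ((∑ k ∈ range n, X k ω : ℤ) : ℝ) / n ∧
        ((∑ k ∈ range n, X k ω : ℤ) : ℝ) / n ≤ 2 * pu - 1})) atTop (𝓝 (klBer x p)) := by
  refine (tendsto_neg_log_sum_binomProb hp0 hp1 hpl hlu hpu hx hmin).congr' ?_
  filter_upwards [eventually_gt_atTop 0] with n hn
  rw [measureReal_mean_mem_eq_sum_binomProb hmeas hindep hval hdist pl pu hn]

/-- Sanov's theorem for Bernoulli random variables. -/
theorem stmt7 {Ω : Type*} [MeasurableSpace Ω] (μ : Measure Ω) [IsProbabilityMeasure μ]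
    (p : ℝ) (hp0 : 0 < p) (hp1 : p < 1)
    (X : ℕ → Ω → ℤ) (hmeas : ∀ i, Measurable (X i))
    (hindep : iIndepFun X μ)
    (hval : ∀ i ω, X i ω = 1 ∨ X i ω = -1)
    (hdist : ∀ i, μ {ω | X i ω = 1} = ENNReal.ofReal p)
    (pl pu : ℝ) (hpl : 0 ≤ pl) (hlu : pl < pu) (hpu : pu ≤ 1) :
    (p < pl →
      Tendsto (fun n : ℕ => -(1/(n:ℝ)) * Real.log ((μ {ω |
          2*pl - 1 ≤ ((∑ k ∈ Finset.range n, X k ω : ℤ) : ℝ)/n ∧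
          ((∑ k ∈ Finset.range n, X k ω : ℤ) : ℝ)/n ≤ 2*pu - 1}).toReal))
        atTop (nhds (klBer pl p))) ∧
    (pl ≤ p → p ≤ pu →
      Tendsto (fun n : ℕ => -(1/(n:ℝ)) * Real.log ((μ {ω |
          2*pl - 1 ≤ ((∑ k ∈ Finset.range n, X k ω : ℤ) : ℝ)/n ∧
          ((∑ k ∈ Finset.range n, X k ω : ℤ) : ℝ)/n ≤ 2*pu - 1}).toReal))
        atTop (nhds 0)) ∧
    (pu < p →
      Tendsto (fun n : ℕ => -(1/(n:ℝ)) * Real.log ((μ {ω |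
          2*pl - 1 ≤ ((∑ k ∈ Finset.range n, X k ω : ℤ) : ℝ)/n ∧
          ((∑ k ∈ Finset.range n, X k ω : ℤ) : ℝ)/n ≤ 2*pu - 1}).toReal))
        atTop (nhds (klBer pu p))) := by
  have hdist' : ∀ i, μ.real {ω | X i ω = 1} = p := fun i => by
    rw [measureReal_def, hdist, ENNReal.toReal_ofReal hp0.le]
  have hrate (x : ℝ) :=
    tendsto_neg_log_measureReal_mean_mem (x := x) hp0 hp1 hmeas hindep hval hdist' hpl hlu hpu
  refine ⟨fun h => hrate _ ⟨le_rfl, hlu.le⟩ (isMinOn_klBer_left hp0 hp1 h.le hpu),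
    fun h1 h2 => ?_, fun h => hrate _ ⟨hlu.le, le_rfl⟩ (isMinOn_klBer_right hp0 hp1 hpl h.le)⟩
  have h := hrate _ ⟨h1, h2⟩ (isMinOn_klBer_self hp0 hp1 hpl hpu)
  rwa [klBer_self] at h
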